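/- The function c_uc^{unif}(γ) = γ ∑_{i=0}^{∞} (γ^i/i!) e^{−γ} log₂((i+1)/γ) satisfies lim_{γ → ∞} c_uc^{unif}(γ) = (log₂ e)/2. -/

import Mathlib

/-!
Let `P ~ Poisson(γ)` and `t = (P + 1) / γ`. Write `log t = (t - 1) - (t - 1)² / 2 + R(t)`, where
`|R(t)| ≤ |t - 1|³ (1 + t⁻¹)` by the mean value theorem, as `R' (s) = (s - 1)² / s`.
Since `E(P + 1 - γ) = 1` and `E(P + 1 - γ)² = 1 + γ`, the polynomial part contributes exactly
`1/2 - 1/(2γ)` to `γ E log t`. On the remainder, `t⁻¹ = γ / (P + 1)` is absorbed by shifting the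
Poisson weights, and `|x|³ ≤ √γ x² + x⁴ / (4√γ)` together with `E(P - γ)⁴ = γ(1 + 3γ)` bounds
`γ E|R(t)|` by `8 / √γ`. All moments follow from Stein's identity `E[P f(P)] = γ E[f(P + 1)]`.
-/

open Filter Real Finset Nat

noncomputable def poissonWeight (γ : ℝ) (i : ℕ) : ℝ := γ ^ i / i ! * exp (-γ)

noncomputable def poissonCentralMoment (γ : ℝ) (k : ℕ) : ℝ :=
  ∑' i : ℕ, ((i : ℝ) - γ) ^ k * poissonWeight γ i

noncomputable def logRemainder (t : ℝ) : ℝ := log t - (t - 1) + (t - 1) ^ 2 / 2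

section Poisson

variable (γ : ℝ)

lemma poissonWeight_nonneg {γ : ℝ} (hγ : 0 ≤ γ) (i : ℕ) : 0 ≤ poissonWeight γ i := by
  unfold poissonWeight
  positivity

lemma poissonWeight_succ (i : ℕ) :
    poissonWeight γ (i + 1) = γ / (i + 1) * poissonWeight γ i := by
  simp only [poissonWeight, pow_succ, factorial_succ, cast_mul, cast_succ]
  field_simp

lemma hasSum_poissonWeight : HasSum (poissonWeight γ) 1 := by
  have h := (NormedSpace.expSeries_div_hasSum_exp γ).mul_right (exp (-γ))
  rwa [← exp_eq_exp_ℝ, ← exp_add, add_neg_cancel, exp_zero] at h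

lemma summable_sub_pow_mul_poissonWeight (a : ℝ) (k : ℕ) :
    Summable fun i : ℕ => ((i : ℝ) - a) ^ k * poissonWeight γ i := by
  refine .of_norm_bounded
    ((summable_pow_div_factorial (exp 1 * |γ|)).mul_left (k ! * exp |a| * exp (-γ))) fun i => ?_
  have hpow : |(i : ℝ) - a| ^ k ≤ k ! * (exp |a| * exp 1 ^ i) := by
    rw [← exp_nat_mul, mul_one, ← exp_add, ← div_le_iff₀' (by positivity)]
    calc |(i : ℝ) - a| ^ k / k ! ≤ exp |(i : ℝ) - a| := pow_div_factorial_le_exp _ (abs_nonneg _) k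
      _ ≤ exp (|a| + i) :=
        exp_le_exp.2 ((abs_sub _ _).trans_eq (by rw [Nat.abs_cast, add_comm]))
  simp only [poissonWeight, norm_mul, norm_div, norm_pow, Real.norm_eq_abs, abs_exp,
    Nat.abs_cast, mul_pow]
  calc |(i : ℝ) - a| ^ k * (|γ| ^ i / i ! * exp (-γ))
      ≤ k ! * (exp |a| * exp 1 ^ i) * (|γ| ^ i / i ! * exp (-γ)) := by gcongr
    _ = _ := by ring

lemma summable_abs_sub_pow_mul_poissonWeight {γ : ℝ} (hγ : 0 ≤ γ) (a : ℝ) (k : ℕ) :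
    Summable fun i : ℕ => |(i : ℝ) - a| ^ k * poissonWeight γ i := by
  simpa only [abs_mul, abs_pow, abs_of_nonneg (poissonWeight_nonneg hγ _)] using
    (summable_sub_pow_mul_poissonWeight γ a k).abs

lemma summable_abs_add_one_sub_pow_mul_poissonWeight {γ : ℝ} (hγ : 0 ≤ γ) (k : ℕ) :
    Summable fun i : ℕ => |(i : ℝ) + 1 - γ| ^ k * poissonWeight γ i := by
  simpa only [sub_sub_eq_add_sub] using summable_abs_sub_pow_mul_poissonWeight hγ (γ - 1) k

lemma hasSum_natCast_mul_mul_poissonWeight {f : ℕ → ℝ} {a : ℝ}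
    (hf : HasSum (fun i => f (i + 1) * poissonWeight γ i) a) :
    HasSum (fun i : ℕ => (i : ℝ) * f i * poissonWeight γ i) (γ * a) := by
  rw [← hasSum_nat_add_iff' 1, range_one, sum_singleton, CharP.cast_eq_zero, zero_mul, zero_mul,
    sub_zero]
  refine (hf.mul_left γ).congr_fun fun i => ?_
  rw [poissonWeight_succ]
  push_cast
  field_simp

lemma hasSum_poissonCentralMoment (k : ℕ) :
    HasSum (fun i : ℕ => ((i : ℝ) - γ) ^ k * poissonWeight γ i) (poissonCentralMoment γ k) :=
  (summable_sub_pow_mul_poissonWeight γ γ k).hasSum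

lemma hasSum_add_one_sub_pow_mul_poissonWeight (k : ℕ) :
    HasSum (fun i : ℕ => ((i : ℝ) + 1 - γ) ^ k * poissonWeight γ i)
      (∑ j ∈ range (k + 1), k.choose j * poissonCentralMoment γ j) := by
  refine (hasSum_sum fun j _ =>
    (hasSum_poissonCentralMoment γ j).mul_left (k.choose j : ℝ)).congr_fun fun i => ?_
  rw [add_sub_right_comm, add_pow, sum_mul]
  exact sum_congr rfl fun j _ => by ring

lemma poissonCentralMoment_succ (k : ℕ) :
    poissonCentralMoment γ (k + 1) =
      γ * ∑ j ∈ range k, k.choose j * poissonCentralMoment γ j := by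
  have hstein := hasSum_natCast_mul_mul_poissonWeight γ (f := fun i => ((i : ℝ) - γ) ^ k)
    (by simpa only [cast_succ, add_sub_right_comm] using
      hasSum_add_one_sub_pow_mul_poissonWeight γ k)
  refine (hasSum_poissonCentralMoment γ (k + 1)).unique
    ((hstein.sub ((hasSum_poissonCentralMoment γ k).mul_left γ)).congr_fun fun i => by ring)
    |>.trans ?_
  rw [sum_range_succ, choose_self, cast_one, one_mul, mul_add, add_sub_cancel_right]

lemma poissonCentralMoment_zero : poissonCentralMoment γ 0 = 1 := by
  simpa [poissonCentralMoment] using (hasSum_poissonWeight γ).tsum_eq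

lemma poissonCentralMoment_one : poissonCentralMoment γ 1 = 0 := by
  simp [poissonCentralMoment_succ]

lemma poissonCentralMoment_two : poissonCentralMoment γ 2 = γ := by
  simp [poissonCentralMoment_succ, poissonCentralMoment_zero]

lemma poissonCentralMoment_three : poissonCentralMoment γ 3 = γ := by
  rw [poissonCentralMoment_succ]
  norm_num [sum_range_succ, poissonCentralMoment_zero, poissonCentralMoment_one]

lemma poissonCentralMoment_four : poissonCentralMoment γ 4 = γ * (1 + 3 * γ) := by
  rw [poissonCentralMoment_succ]
  norm_num [sum_range_succ, poissonCentralMoment_zero, poissonCentralMoment_one,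
    poissonCentralMoment_two]

lemma hasSum_add_one_sub_mul_poissonWeight :
    HasSum (fun i : ℕ => ((i : ℝ) + 1 - γ) * poissonWeight γ i) 1 := by
  simpa [sum_range_succ, poissonCentralMoment_zero, poissonCentralMoment_one] using
    hasSum_add_one_sub_pow_mul_poissonWeight γ 1

lemma hasSum_add_one_sub_sq_mul_poissonWeight :
    HasSum (fun i : ℕ => ((i : ℝ) + 1 - γ) ^ 2 * poissonWeight γ i) (1 + γ) := by
  simpa [sum_range_succ, poissonCentralMoment_zero, poissonCentralMoment_one,
    poissonCentralMoment_two] using hasSum_add_one_sub_pow_mul_poissonWeight γ 2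

lemma hasSum_add_one_sub_pow_four_mul_poissonWeight :
    HasSum (fun i : ℕ => ((i : ℝ) + 1 - γ) ^ 4 * poissonWeight γ i)
      (1 + 11 * γ + 3 * γ ^ 2) := by
  convert hasSum_add_one_sub_pow_mul_poissonWeight γ 4 using 1
  norm_num [sum_range_succ, Nat.choose, poissonCentralMoment_zero, poissonCentralMoment_one,
    poissonCentralMoment_two, poissonCentralMoment_three, poissonCentralMoment_four]
  ring

end Poisson

lemma hasDerivAt_logRemainder {t : ℝ} (ht : t ≠ 0) :
    HasDerivAt logRemainder ((t - 1) ^ 2 / t) t := by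
  refine (((hasDerivAt_log ht).sub ((hasDerivAt_id t).sub_const 1)).add
    ((((hasDerivAt_id t).sub_const 1).pow 2).div_const 2)).congr_deriv ?_
  simp only [id, Nat.cast_ofNat]
  field_simp
  ring

lemma abs_logRemainder_le {t : ℝ} (ht : 0 < t) :
    |logRemainder t| ≤ |t - 1| ^ 3 * (1 + t⁻¹) := by
  have hpos : ∀ s ∈ Set.uIcc 1 t, 0 < s := fun s hs =>
    lt_of_lt_of_le (lt_min one_pos ht) hs.1
  have hderiv : ∀ s ∈ Set.uIcc 1 t, ‖(s - 1) ^ 2 / s‖ ≤ (t - 1) ^ 2 * (1 + t⁻¹) := by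
    intro s hs
    have hinv : s⁻¹ ≤ 1 + t⁻¹ := by
      rcases le_or_gt 1 s with h | h
      · linarith [inv_le_one_of_one_le₀ h, inv_pos.2 ht]
      · linarith [inv_anti₀ ht ((min_le_iff.1 hs.1).resolve_left (not_le.2 h))]
    rw [Real.norm_eq_abs, abs_div, abs_of_pos (hpos s hs), div_eq_mul_inv, abs_sq]
    exact mul_le_mul (sq_le_sq.2 (Set.abs_sub_left_of_mem_uIcc hs)) hinv (inv_pos.2 (hpos s hs)).le
      (sq_nonneg _)
  have h := Convex.norm_image_sub_le_of_norm_hasDerivWithin_le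
    (fun s hs => (hasDerivAt_logRemainder (hpos s hs).ne').hasDerivWithinAt) hderiv
    (convex_uIcc 1 t) Set.left_mem_uIcc Set.right_mem_uIcc
  have hone : logRemainder 1 = 0 := by simp [logRemainder]
  rw [hone, sub_zero, Real.norm_eq_abs, Real.norm_eq_abs] at h
  calc |logRemainder t| ≤ (t - 1) ^ 2 * (1 + t⁻¹) * |t - 1| := h
    _ = _ := by rw [← abs_sq, abs_pow]; ring

lemma abs_pow_three_le (x : ℝ) {s : ℝ} (hs : 0 < s) :
    |x| ^ 3 ≤ s * x ^ 2 + x ^ 4 / (4 * s) := by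
  have h : s * x ^ 2 + x ^ 4 / (4 * s) - |x| ^ 3 = (x ^ 2 - 2 * s * |x|) ^ 2 / (4 * s) := by
    field_simp
    rw [← sq_abs x]
    ring
  rw [← sub_nonneg, h]
  positivity

lemma tsum_abs_pow_three_mul_le {p x : ℕ → ℝ} {m₂ m₄ s : ℝ} (hp : ∀ i, 0 ≤ p i)
    (h₃ : Summable fun i => |x i| ^ 3 * p i) (h₂ : HasSum (fun i => x i ^ 2 * p i) m₂)
    (h₄ : HasSum (fun i => x i ^ 4 * p i) m₄) (hs : 0 < s) :
    ∑' i, |x i| ^ 3 * p i ≤ s * m₂ + m₄ / (4 * s) :=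
  hasSum_le (fun i => (mul_le_mul_of_nonneg_right (abs_pow_three_le (x i) hs) (hp i)).trans_eq
    (by ring)) h₃.hasSum ((h₂.mul_left s).add (h₄.div_const (4 * s)))

section Remainder

variable {γ : ℝ}

lemma abs_poissonWeight_mul_logRemainder_le (hγ : 0 < γ) (i : ℕ) :
    |poissonWeight γ i * logRemainder ((i + 1) / γ)| ≤
      (|(i : ℝ) + 1 - γ| ^ 3 * poissonWeight γ i +
        |((i + 1 : ℕ) : ℝ) - γ| ^ 3 * poissonWeight γ (i + 1)) / γ ^ 3 := by
  have hw := poissonWeight_nonneg hγ.le i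
  have ht : 0 < ((i : ℝ) + 1) / γ := by positivity
  have hsub : ((i : ℝ) + 1) / γ - 1 = ((i : ℝ) + 1 - γ) / γ := by field_simp
  rw [abs_mul, abs_of_nonneg hw, poissonWeight_succ, cast_succ]
  calc poissonWeight γ i * |logRemainder ((i + 1) / γ)|
      ≤ poissonWeight γ i * (|((i : ℝ) + 1) / γ - 1| ^ 3 * (1 + (((i : ℝ) + 1) / γ)⁻¹)) :=
        mul_le_mul_of_nonneg_left (abs_logRemainder_le ht) hw
    _ = _ := by
        rw [hsub, abs_div, abs_of_pos hγ, inv_div]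
        field_simp

lemma summable_poissonWeight_mul_logRemainder (hγ : 0 < γ) :
    Summable fun i : ℕ => poissonWeight γ i * logRemainder ((i + 1) / γ) := by
  refine .of_norm_bounded (((summable_abs_add_one_sub_pow_mul_poissonWeight hγ.le 3).add
    ((summable_nat_add_iff 1).2 (summable_abs_sub_pow_mul_poissonWeight hγ.le γ 3))).div_const
      (γ ^ 3)) fun i => (Real.norm_eq_abs _).trans_le (abs_poissonWeight_mul_logRemainder_le hγ i)

lemma tsum_abs_pow_three_mul_poissonWeight_le (hγ : 1 ≤ γ) :
    ∑' i : ℕ, |(i : ℝ) + 1 - γ| ^ 3 * poissonWeight γ i +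
      ∑' i : ℕ, |((i + 1 : ℕ) : ℝ) - γ| ^ 3 * poissonWeight γ (i + 1) ≤ 8 * γ * √γ := by
  have hγ0 : 0 < γ := one_pos.trans_le hγ
  have hs : 1 ≤ √γ := one_le_sqrt.2 hγ
  have hs0 : 0 < √γ := one_pos.trans_le hs
  have hFs := summable_abs_sub_pow_mul_poissonWeight hγ0.le γ 3
  have hA : ∑' i : ℕ, |(i : ℝ) + 1 - γ| ^ 3 * poissonWeight γ i ≤
      √γ * (1 + γ) + (1 + 11 * γ + 3 * γ ^ 2) / (4 * √γ) :=
    tsum_abs_pow_three_mul_le (poissonWeight_nonneg hγ0.le)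
      (summable_abs_add_one_sub_pow_mul_poissonWeight hγ0.le 3)
      (hasSum_add_one_sub_sq_mul_poissonWeight γ)
      (hasSum_add_one_sub_pow_four_mul_poissonWeight γ) hs0
  have hF : ∑' j : ℕ, |(j : ℝ) - γ| ^ 3 * poissonWeight γ j ≤
      √γ * γ + γ * (1 + 3 * γ) / (4 * √γ) :=
    tsum_abs_pow_three_mul_le (poissonWeight_nonneg hγ0.le) hFs
      (by simpa only [poissonCentralMoment_two] using hasSum_poissonCentralMoment γ 2)
      (by simpa only [poissonCentralMoment_four] using hasSum_poissonCentralMoment γ 4) hs0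
  have hshift : ∑' i : ℕ, |((i + 1 : ℕ) : ℝ) - γ| ^ 3 * poissonWeight γ (i + 1) ≤
      ∑' j : ℕ, |(j : ℝ) - γ| ^ 3 * poissonWeight γ j := by
    rw [hFs.tsum_eq_zero_add]
    linarith [mul_nonneg (pow_nonneg (abs_nonneg ((0 : ℕ) - γ)) 3) (poissonWeight_nonneg hγ0.le 0)]
  have hfrac : (1 + 11 * γ + 3 * γ ^ 2) / (4 * √γ) + γ * (1 + 3 * γ) / (4 * √γ) ≤
      5 * γ * √γ := by
    rw [← add_div, div_le_iff₀ (by positivity),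
      show 5 * γ * √γ * (4 * √γ) = 20 * γ * (√γ * √γ) by ring, mul_self_sqrt hγ0.le]
    nlinarith
  have hcube : √γ * (1 + γ) + √γ * γ ≤ 3 * γ * √γ := by nlinarith
  linarith

lemma abs_mul_tsum_poissonWeight_mul_logRemainder_le (hγ : 1 ≤ γ) :
    |γ * ∑' i : ℕ, poissonWeight γ i * logRemainder ((i + 1) / γ)| ≤ 8 / √γ := by
  have hγ0 : 0 < γ := one_pos.trans_le hγ
  have hR := tsum_of_norm_bounded
    (((summable_abs_add_one_sub_pow_mul_poissonWeight hγ0.le 3).hasSum.add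
      ((summable_nat_add_iff 1).2
        (summable_abs_sub_pow_mul_poissonWeight hγ0.le γ 3)).hasSum).div_const (γ ^ 3))
    fun i => (Real.norm_eq_abs _).trans_le (abs_poissonWeight_mul_logRemainder_le hγ0 i)
  rw [abs_mul, abs_of_pos hγ0]
  calc γ * |∑' i : ℕ, poissonWeight γ i * logRemainder ((i + 1) / γ)|
      ≤ γ * (8 * γ * √γ / γ ^ 3) := by
        gcongr
        exact hR.trans (by gcongr; exact tsum_abs_pow_three_mul_poissonWeight_le hγ)
    _ = 8 / √γ := by
        field_simp
        exact sq_sqrt hγ0.le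

lemma mul_tsum_poissonWeight_mul_log_eq (hγ : 0 < γ) :
    γ * ∑' i : ℕ, poissonWeight γ i * log ((i + 1) / γ) =
      1 / 2 - 1 / (2 * γ) + γ * ∑' i : ℕ, poissonWeight γ i * logRemainder ((i + 1) / γ) := by
  have h := (((hasSum_add_one_sub_mul_poissonWeight γ).div_const γ).sub
    ((hasSum_add_one_sub_sq_mul_poissonWeight γ).div_const (2 * γ ^ 2))).add
      (summable_poissonWeight_mul_logRemainder hγ).hasSum
  rw [(h.congr_fun fun i => ?_).tsum_eq]
  · field_simp
    ring
  · simp only [logRemainder]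
    field_simp
    ring

end Remainder

/-- `c_uc^{unif}(γ) = γ ∑_{i} (γ^i/i!) e^{−γ} log₂((i+1)/γ) → (log₂ e)/2`
as `γ → ∞`. -/
theorem uncoordinated_uniform_rate_limit_at_infty :
    Tendsto (fun γ : ℝ =>
        γ * ∑' i : ℕ,
          γ ^ i / (Nat.factorial i) * Real.exp (-γ) * Real.logb 2 ((i + 1 : ℝ) / γ))
      atTop (nhds (Real.logb 2 (Real.exp 1) / 2)) := by
  have hR : Tendsto (fun γ => γ * ∑' i : ℕ, poissonWeight γ i * logRemainder ((i + 1) / γ))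
      atTop (nhds 0) :=
    squeeze_zero_norm' ((eventually_ge_atTop 1).mono fun γ hγ =>
        abs_mul_tsum_poissonWeight_mul_logRemainder_le hγ)
      (tendsto_const_nhds.div_atTop tendsto_sqrt_atTop)
  have hinv : Tendsto (fun γ : ℝ => 1 / (2 * γ)) atTop (nhds 0) :=
    tendsto_const_nhds.div_atTop (tendsto_id.const_mul_atTop two_pos)
  have hmain : Tendsto (fun γ => γ * ∑' i : ℕ, poissonWeight γ i * log ((i + 1) / γ))
      atTop (nhds (1 / 2)) := by
    refine .congr' ((eventually_gt_atTop 0).mono fun γ hγ =>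
      (mul_tsum_poissonWeight_mul_log_eq hγ).symm) ?_
    simpa using ((tendsto_const_nhds (x := (1 / 2 : ℝ))).sub hinv).add hR
  rw [logb, log_exp, div_right_comm]
  refine (hmain.div_const (log 2)).congr fun γ => ?_
  rw [mul_div_assoc, ← tsum_div_const]
  simp only [logb, poissonWeight, mul_div_assoc]
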